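/- Let n ≥ 1 and i ∈ [n]. The image of the map inv_i on the group B_n is exactly the set {0, 1, ..., 2(n−i)+1}. -/
import Mathlib


/-- A signed permutation `π` of `[n]`: `π(i) = ε i · σ(i)` with `σ` a permutation
of `[n]` and signs `ε i ∈ {±1}`.  Positions are encoded by `Fin n`
(position `i ∈ [n]` corresponds to `⟨i-1, _⟩ : Fin n`). -/
structure SignedPerm (n : ℕ) where
  σ : Equiv.Perm (Fin n)
  ε : Fin n → ℤ
  hε : ∀ i, ε i = 1 ∨ ε i = -1

namespace SignedPerm

variable {n : ℕ}

/-- The signed value `π(i) = ε i · σ(i) ∈ {-n, …, -1, 1, …, n}` (1-based value). -/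
def val (π : SignedPerm n) (i : Fin n) : ℤ :=
  π.ε i * ((π.σ i : ℕ) + 1)

/-- The standard basis vector `e i` of `ℝ^n`. -/
def e (i : Fin n) : Fin n → ℝ := Pi.single i 1

/-- The action of a signed permutation on `ℝ^n`, determined by
`π · e i = ε i · e (σ i)`. -/
def act (π : SignedPerm n) (v : Fin n → ℝ) : Fin n → ℝ :=
  fun j => (π.ε (π.σ.symm j) : ℝ) * v (π.σ.symm j)

/-- The positive root system `Φₙ⁺ = {e k, e i + e j, e i - e j : k, i < j}` of `Bₙ`. -/
def PhiPos (n : ℕ) : Set (Fin n → ℝ) :=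
  {v | (∃ k : Fin n, v = e k) ∨ ∃ i j : Fin n, i < j ∧ (v = e i + e j ∨ v = e i - e j)}

/-- The positive roots `Φₙ,ᵢ⁺ = {e i, e i + e j, e i - e j : i < j ≤ n}`. -/
def PhiPosI (n : ℕ) (i : Fin n) : Set (Fin n → ℝ) :=
  {v | v = e i ∨ ∃ j : Fin n, i < j ∧ (v = e i + e j ∨ v = e i - e j)}

/-- The `i`-inversion number `invᵢ π = #{v ∈ Φₙ,ᵢ⁺ : π · v ∈ -Φₙ⁺}`. -/
noncomputable def invi (i : Fin n) (π : SignedPerm n) : ℕ :=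
  Set.ncard {v | v ∈ PhiPosI n i ∧ -(π.act v) ∈ PhiPos n}

/-- The inversion number `inv π = #{v ∈ Φₙ⁺ : π · v ∈ -Φₙ⁺}`. -/
noncomputable def inv (π : SignedPerm n) : ℕ :=
  Set.ncard {v | v ∈ PhiPos n ∧ -(π.act v) ∈ PhiPos n}

lemma e_apply (k j : Fin n) : e k j = if j = k then 1 else 0 :=
  Pi.single_apply k 1 j

lemma e_inj {a b : Fin n} (h : e a = e b) : a = b := by
  by_contra hne
  have := congrFun h a
  simp [e_apply, hne] at this

lemma sum_e (k : Fin n) : ∑ j, e k j = 1 := by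
  simp [e_apply]

lemma sum_add_e (a b : Fin n) : ∑ j, (e a + e b) j = 2 := by
  simp [Pi.add_apply, Finset.sum_add_distrib, sum_e]
  norm_num

lemma sum_sub_e (a b : Fin n) : ∑ j, (e a - e b) j = 0 := by
  simp [Pi.sub_apply, Finset.sum_sub_distrib, sum_e]

lemma sum_mem_phipos {v : Fin n → ℝ} (h : v ∈ PhiPos n) :
    (∑ j, v j) = 1 ∨ (∑ j, v j) = 2 ∨ (∑ j, v j) = 0 := by
  rcases h with ⟨k, rfl⟩ | ⟨a, b, hab, rfl | rfl⟩
  · exact Or.inl (sum_e k)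
  · exact Or.inr (Or.inl (sum_add_e a b))
  · exact Or.inr (Or.inr (sum_sub_e a b))

lemma e_mem_phipos (k : Fin n) : e k ∈ PhiPos n := Or.inl ⟨k, rfl⟩

lemma neg_e_notMem (k : Fin n) : -(e k) ∉ PhiPos n := by
  intro h
  have := sum_mem_phipos h
  simp only [Pi.neg_apply, Finset.sum_neg_distrib, sum_e] at this
  norm_num at this

lemma add_mem_phipos {a b : Fin n} (h : a ≠ b) : e a + e b ∈ PhiPos n := by
  rcases lt_or_gt_of_ne h with h | h
  · exact Or.inr ⟨a, b, h, Or.inl rfl⟩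
  · exact Or.inr ⟨b, a, h, Or.inl (by rw [add_comm])⟩

lemma neg_add_notMem (a b : Fin n) : -(e a + e b) ∉ PhiPos n := by
  intro h
  have := sum_mem_phipos h
  simp only [Pi.neg_apply, Finset.sum_neg_distrib, Pi.add_apply,
    Finset.sum_add_distrib, sum_e] at this
  norm_num at this

lemma e_self (a : Fin n) : e a a = 1 := by simp [e_apply]

lemma e_of_ne {a b : Fin n} (h : a ≠ b) : e b a = 0 := by simp [e_apply, h]

lemma sub_mem_phipos_iff {a b : Fin n} (h : a ≠ b) :
    e a - e b ∈ PhiPos n ↔ a < b := by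
  constructor
  · rintro (⟨k, hk⟩ | ⟨p, q, hpq, h1 | h1⟩)
    · have := congrArg (fun w : Fin n → ℝ => ∑ j, w j) hk
      simp only [sum_sub_e, sum_e] at this
      norm_num at this
    · have := congrArg (fun w : Fin n → ℝ => ∑ j, w j) h1
      simp only [sum_sub_e, sum_add_e] at this
      norm_num at this
    · have ha := congrFun h1 a
      have hb := congrFun h1 b
      rw [Pi.sub_apply, Pi.sub_apply, e_self, e_of_ne h] at ha
      rw [Pi.sub_apply, Pi.sub_apply, e_self, e_of_ne (Ne.symm h)] at hb
      have hap : a = p := by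
        rcases eq_or_ne a p with h' | h'
        · exact h'
        · rw [e_of_ne h'] at ha
          rcases eq_or_ne a q with h'' | h''
          · rw [h'', e_self] at ha; norm_num at ha
          · rw [e_of_ne h''] at ha; norm_num at ha
      have hbq : b = q := by
        rcases eq_or_ne b q with h' | h'
        · exact h'
        · rw [e_of_ne h'] at hb
          rcases eq_or_ne b p with h'' | h''
          · rw [h'', e_self] at hb; norm_num at hb
          · rw [e_of_ne h''] at hb; norm_num at hb
      rw [hap, hbq]; exact hpq
  · intro hab
    exact Or.inr ⟨a, b, hab, Or.inr rfl⟩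


lemma crit_single {s : ℤ} (hs : s = 1 ∨ s = -1) (k : Fin n) :
    -((s : ℝ) • e k) ∈ PhiPos n ↔ s = -1 := by
  rcases hs with rfl | rfl
  · simp only [Int.cast_one, one_smul]
    exact iff_of_false (neg_e_notMem k) (by norm_num)
  · simp only [Int.cast_neg, Int.cast_one, neg_smul, one_smul, neg_neg]
    exact iff_of_true (e_mem_phipos k) trivial

lemma crit_pair {s t : ℤ} (hs : s = 1 ∨ s = -1) (ht : t = 1 ∨ t = -1)
    {a b : Fin n} (hab : a ≠ b) :
    -((s : ℝ) • e a + (t : ℝ) • e b) ∈ PhiPos n ↔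
      ((s = -1 ∧ t = -1) ∨ (s = -1 ∧ t = 1 ∧ a < b) ∨ (s = 1 ∧ t = -1 ∧ b < a)) := by
  rcases hs with rfl | rfl <;> rcases ht with rfl | rfl
  · have hv : -(((1:ℤ) : ℝ) • e a + ((1:ℤ) : ℝ) • e b) = -(e a + e b) := by
      push_cast; module
    rw [hv]
    exact iff_of_false (neg_add_notMem a b)
      (by rintro (⟨h, -⟩ | ⟨h, -⟩ | ⟨-, h, -⟩) <;> norm_num at h)
  · have hv : -(((1:ℤ) : ℝ) • e a + (((-1):ℤ) : ℝ) • e b) = e b - e a := by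
      push_cast; module
    rw [hv, sub_mem_phipos_iff (Ne.symm hab)]
    norm_num
  · have hv : -((((-1):ℤ) : ℝ) • e a + ((1:ℤ) : ℝ) • e b) = e a - e b := by
      push_cast; module
    rw [hv, sub_mem_phipos_iff hab]
    norm_num
  · have hv : -((((-1):ℤ) : ℝ) • e a + (((-1):ℤ) : ℝ) • e b) = e a + e b := by
      push_cast; module
    rw [hv]
    exact iff_of_true (add_mem_phipos hab) (by norm_num)

lemma act_e (π : SignedPerm n) (k : Fin n) :
    π.act (e k) = (π.ε k : ℝ) • e (π.σ k) := by
  funext j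
  simp only [act, Pi.smul_apply, smul_eq_mul, e_apply]
  rcases eq_or_ne j (π.σ k) with h | h
  · subst h
    simp
  · have h2 : π.σ.symm j ≠ k := fun hh => h (by rw [← hh, Equiv.apply_symm_apply])
    simp [h, h2]

lemma act_add (π : SignedPerm n) (u v : Fin n → ℝ) :
    π.act (u + v) = π.act u + π.act v := by
  funext j; simp only [act, Pi.add_apply]; ring

lemma act_sub (π : SignedPerm n) (u v : Fin n → ℝ) :
    π.act (u - v) = π.act u - π.act v := by
  funext j; simp only [act, Pi.sub_apply]; ring

def condP (π : SignedPerm n) (i j : Fin n) : Prop :=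
  (π.ε i = -1 ∧ π.ε j = -1) ∨ (π.ε i = -1 ∧ π.ε j = 1 ∧ π.σ i < π.σ j) ∨
    (π.ε i = 1 ∧ π.ε j = -1 ∧ π.σ j < π.σ i)

def condM (π : SignedPerm n) (i j : Fin n) : Prop :=
  (π.ε i = -1 ∧ π.ε j = 1) ∨ (π.ε i = -1 ∧ π.ε j = -1 ∧ π.σ i < π.σ j) ∨
    (π.ε i = 1 ∧ π.ε j = 1 ∧ π.σ j < π.σ i)

lemma inv_cond_e (π : SignedPerm n) (i : Fin n) :
    -(π.act (e i)) ∈ PhiPos n ↔ π.ε i = -1 := by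
  rw [act_e, crit_single (π.hε i)]

lemma inv_cond_add (π : SignedPerm n) {i j : Fin n} (hij : i ≠ j) :
    -(π.act (e i + e j)) ∈ PhiPos n ↔ condP π i j := by
  rw [act_add, act_e, act_e,
    crit_pair (π.hε i) (π.hε j) (fun hh => hij (π.σ.injective hh))]
  rfl

lemma inv_cond_sub (π : SignedPerm n) {i j : Fin n} (hij : i ≠ j) :
    -(π.act (e i - e j)) ∈ PhiPos n ↔ condM π i j := by
  rw [act_sub, act_e, act_e]
  have hv : (π.ε i : ℝ) • e (π.σ i) - (π.ε j : ℝ) • e (π.σ j)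
      = (π.ε i : ℝ) • e (π.σ i) + ((-π.ε j : ℤ) : ℝ) • e (π.σ j) := by
    push_cast; module
  rw [hv, crit_pair (π.hε i) (by rcases π.hε j with h | h <;> simp [h])
    (fun hh => hij (π.σ.injective hh))]
  have h1 : (-π.ε j = -1) ↔ π.ε j = 1 := by omega
  have h2 : (-π.ε j = 1) ↔ π.ε j = -1 := by omega
  rw [h1, h2]
  rfl


open Classical in
lemma invi_eq_card (π : SignedPerm n) (i : Fin n) :
    invi i π = (if π.ε i = -1 then 1 else 0)
      + (Finset.univ.filter (fun j => i < j ∧ condP π i j)).card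
      + (Finset.univ.filter (fun j => i < j ∧ condM π i j)).card := by
  classical
  set P := Finset.univ.filter (fun j => i < j ∧ condP π i j) with hP
  set M := Finset.univ.filter (fun j => i < j ∧ condM π i j) with hM
  set A : Finset (Fin n → ℝ) := if π.ε i = -1 then {e i} else ∅ with hA
  have hset : {v | v ∈ PhiPosI n i ∧ -(π.act v) ∈ PhiPos n}
      = ↑(A ∪ P.image (fun j => e i + e j) ∪ M.image (fun j => e i - e j)) := by
    ext v
    simp only [Set.mem_setOf_eq, PhiPosI, Finset.coe_union, Set.mem_union,
      Finset.coe_image, Set.mem_image, Finset.mem_coe, hP, hM, Finset.mem_filter,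
      Finset.mem_univ, true_and]
    constructor
    · rintro ⟨h1 | ⟨j, hij, h2 | h2⟩, hc⟩
      · subst h1
        rw [inv_cond_e] at hc
        left; left
        rw [hA, if_pos hc]
        exact Finset.mem_singleton_self _
      · subst h2
        exact Or.inl (Or.inr ⟨j, ⟨hij, (inv_cond_add π hij.ne).mp hc⟩, rfl⟩)
      · subst h2
        exact Or.inr ⟨j, ⟨hij, (inv_cond_sub π hij.ne).mp hc⟩, rfl⟩
    · rintro ((h | ⟨j, ⟨hij, hcp⟩, rfl⟩) | ⟨j, ⟨hij, hcm⟩, rfl⟩)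
      · rw [hA] at h
        split_ifs at h with hε
        · rw [Finset.mem_singleton] at h
          subst h
          exact ⟨Or.inl rfl, (inv_cond_e π i).mpr hε⟩
        · exact absurd h (Finset.notMem_empty v)
      · exact ⟨Or.inr ⟨j, hij, Or.inl rfl⟩, (inv_cond_add π hij.ne).mpr hcp⟩
      · exact ⟨Or.inr ⟨j, hij, Or.inr rfl⟩, (inv_cond_sub π hij.ne).mpr hcm⟩
  have hinjP : Function.Injective (fun j : Fin n => e i + e j) := fun a b h =>
    e_inj (add_left_cancel h)
  have hinjM : Function.Injective (fun j : Fin n => e i - e j) := fun a b h =>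
    e_inj (sub_right_injective h)
  have sumA : ∀ v ∈ A, ∑ j, v j = 1 := by
    intro v hv
    rw [hA] at hv
    split_ifs at hv with hε
    · rw [Finset.mem_singleton] at hv; subst hv; exact sum_e i
    · exact absurd hv (Finset.notMem_empty v)
  have d1 : Disjoint A (P.image (fun j => e i + e j)) := by
    rw [Finset.disjoint_left]
    rintro v hv hv2
    obtain ⟨j, -, rfl⟩ := Finset.mem_image.mp hv2
    have := sumA _ hv
    rw [sum_add_e] at this
    norm_num at this
  have d2 : Disjoint (A ∪ P.image (fun j => e i + e j)) (M.image fun j => e i - e j) := by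
    rw [Finset.disjoint_left]
    rintro v hv hv2
    obtain ⟨j, -, rfl⟩ := Finset.mem_image.mp hv2
    rcases Finset.mem_union.mp hv with h | h
    · have := sumA _ h
      rw [sum_sub_e] at this
      norm_num at this
    · obtain ⟨j', -, hj'⟩ := Finset.mem_image.mp h
      have := congrArg (fun w : Fin n → ℝ => ∑ x, w x) hj'
      simp only [sum_add_e, sum_sub_e] at this
      norm_num at this
  have hcardA : A.card = if π.ε i = -1 then 1 else 0 := by
    rw [hA]; split_ifs <;> simp
  unfold invi
  rw [hset, Set.ncard_coe_finset, Finset.card_union_of_disjoint d2,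
    Finset.card_union_of_disjoint d1, Finset.card_image_of_injective _ hinjP,
    Finset.card_image_of_injective _ hinjM, hcardA]


open Classical in
lemma invi_construct1 {π : SignedPerm n} {i t : Fin n} (hit : i ≤ t)
    (hσ : π.σ = Equiv.swap i t) (hε : ∀ j, π.ε j = 1) :
    invi i π = t.val - i.val := by
  classical
  rw [invi_eq_card]
  have hP : (Finset.univ.filter (fun j => i < j ∧ condP π i j)) = ∅ := by
    rw [Finset.filter_eq_empty_iff]
    rintro j -
    rintro ⟨-, ⟨h, -⟩ | ⟨h, -⟩ | ⟨-, h, -⟩⟩ <;> rw [hε] at h <;> norm_num at h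
  have hM : (Finset.univ.filter (fun j => i < j ∧ condM π i j)) = Finset.Ioc i t := by
    ext j
    simp only [Finset.mem_filter, Finset.mem_univ, true_and, Finset.mem_Ioc]
    constructor
    · rintro ⟨hij, ⟨h, -⟩ | ⟨h, -⟩ | ⟨-, -, h⟩⟩
      · rw [hε] at h; norm_num at h
      · rw [hε] at h; norm_num at h
      · refine ⟨hij, ?_⟩
        rw [hσ, Equiv.swap_apply_left] at h
        rcases eq_or_ne j t with rfl | hjt
        · exact le_refl j
        · rw [Equiv.swap_apply_of_ne_of_ne hij.ne' hjt] at h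
          exact h.le
    · rintro ⟨hij, hjt⟩
      refine ⟨hij, Or.inr (Or.inr ⟨hε i, hε j, ?_⟩)⟩
      rw [hσ, Equiv.swap_apply_left]
      rcases eq_or_ne j t with rfl | hjt'
      · rw [Equiv.swap_apply_right]
        exact hij
      · rw [Equiv.swap_apply_of_ne_of_ne hij.ne' hjt']
        exact lt_of_le_of_ne hjt hjt'
  rw [hP, hM, Finset.card_empty, Fin.card_Ioc, hε i]
  norm_num

open Classical in
lemma invi_construct2 {π : SignedPerm n} {i t : Fin n} (hit : i ≤ t)
    (hσ : π.σ = Equiv.swap i t) (hεi : π.ε i = -1) (hεj : ∀ j, j ≠ i → π.ε j = 1) :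
    invi i π = 1 + (n - 1 - t.val) + (n - 1 - i.val) := by
  classical
  rw [invi_eq_card]
  have hP : (Finset.univ.filter (fun j => i < j ∧ condP π i j)) = Finset.Ioi t := by
    ext j
    simp only [Finset.mem_filter, Finset.mem_univ, true_and, Finset.mem_Ioi]
    constructor
    · rintro ⟨hij, ⟨-, h⟩ | ⟨-, -, h⟩ | ⟨h, -⟩⟩
      · rw [hεj j hij.ne'] at h; norm_num at h
      · rw [hσ, Equiv.swap_apply_left] at h
        rcases eq_or_ne j t with rfl | hjt
        · rw [Equiv.swap_apply_right] at h
          exact absurd h (not_lt.mpr hit)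
        · rwa [Equiv.swap_apply_of_ne_of_ne hij.ne' hjt] at h
      · rw [hεi] at h; norm_num at h
    · intro hj
      have hij : i < j := lt_of_le_of_lt hit hj
      refine ⟨hij, Or.inr (Or.inl ⟨hεi, hεj j hij.ne', ?_⟩)⟩
      rw [hσ, Equiv.swap_apply_left, Equiv.swap_apply_of_ne_of_ne hij.ne' hj.ne']
      exact hj
  have hM : (Finset.univ.filter (fun j => i < j ∧ condM π i j)) = Finset.Ioi i := by
    ext j
    simp only [Finset.mem_filter, Finset.mem_univ, true_and, Finset.mem_Ioi]
    constructor
    · exact fun h => h.1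
    · intro hij
      exact ⟨hij, Or.inl ⟨hεi, hεj j hij.ne'⟩⟩
  rw [hP, hM, Fin.card_Ioi, Fin.card_Ioi, if_pos hεi]

end SignedPerm

open SignedPerm in
/-- The image of `invᵢ` on `Bₙ` is exactly `{0, 1, …, 2(n-i)+1}`
(here the position `i ∈ [n]` is `i.val + 1` in 1-based indexing). -/
theorem invi_range (n : ℕ) (hn : 1 ≤ n) (i : Fin n) :
    Set.range (fun π : SignedPerm n => invi i π)
      = {m : ℕ | m ≤ 2 * (n - (i.val + 1)) + 1} := by

  classical
  have hi : i.val < n := i.isLt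
  ext m
  simp only [Set.mem_range, Set.mem_setOf_eq]
  constructor
  · rintro ⟨π, rfl⟩
    rw [invi_eq_card π i]
    have b1 : (if π.ε i = -1 then 1 else 0) ≤ 1 := by split_ifs <;> norm_num
    have b2 : (Finset.univ.filter (fun j => i < j ∧ condP π i j)).card ≤ n - 1 - i.val := by
      calc (Finset.univ.filter (fun j => i < j ∧ condP π i j)).card
          ≤ (Finset.Ioi i).card := Finset.card_le_card (fun j hj => by
            simp only [Finset.mem_filter] at hj
            exact Finset.mem_Ioi.mpr hj.2.1)
        _ = n - 1 - i.val := Fin.card_Ioi i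
    have b3 : (Finset.univ.filter (fun j => i < j ∧ condM π i j)).card ≤ n - 1 - i.val := by
      calc (Finset.univ.filter (fun j => i < j ∧ condM π i j)).card
          ≤ (Finset.Ioi i).card := Finset.card_le_card (fun j hj => by
            simp only [Finset.mem_filter] at hj
            exact Finset.mem_Ioi.mpr hj.2.1)
        _ = n - 1 - i.val := Fin.card_Ioi i
    omega
  · intro hm
    set N := n - 1 - i.val with hN
    by_cases hcase : m ≤ N
    · have ht : i.val + m < n := by omega
      have hit : i ≤ (⟨i.val + m, ht⟩ : Fin n) := Fin.le_def.mpr (Nat.le_add_right _ _)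
      refine ⟨⟨Equiv.swap i ⟨i.val + m, ht⟩, fun _ => 1, fun _ => Or.inl rfl⟩, ?_⟩
      have h1 := invi_construct1 (π := ⟨Equiv.swap i ⟨i.val + m, ht⟩, fun _ => 1,
        fun _ => Or.inl rfl⟩) hit rfl (fun _ => rfl)
      rw [h1]
      show i.val + m - i.val = m
      omega
    · push_neg at hcase
      have hmN : m ≤ 2 * N + 1 := by omega
      set k := m - N - 1 with hk
      have hkN : k ≤ N := by omega
      have ht : i.val + (N - k) < n := by omega
      have hit : i ≤ (⟨i.val + (N - k), ht⟩ : Fin n) := Fin.le_def.mpr (Nat.le_add_right _ _)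
      refine ⟨⟨Equiv.swap i ⟨i.val + (N - k), ht⟩, fun j => if j = i then -1 else 1,
        fun j => by by_cases h : j = i <;> simp [h]⟩, ?_⟩
      have h2 := invi_construct2 (π := ⟨Equiv.swap i ⟨i.val + (N - k), ht⟩,
        fun j => if j = i then -1 else 1, fun j => by by_cases h : j = i <;> simp [h]⟩) hit rfl
        (if_pos rfl) (fun j hj => if_neg hj)
      rw [h2]
      show 1 + (n - 1 - (i.val + (N - k))) + (n - 1 - i.val) = m
      omega
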